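/- arXiv:1711.07765 — 2 statements merged into one kernel-verified Lean document; each statement's English description precedes it below -/
import Mathlib

section
/- For every element x of the complex Clifford group Γ(V,h), the twisted norm N(x) = τ̃_ℂ(x)·x is a nonzero complex scalar multiple of the identity, i.e. N(x) ∈ ℂ^×·1; moreover N restricts to a group homomorphism N: Γ(V,h) → ℂ^×, i.e. N(x·y) = N(x)·N(y) for all x,y ∈ Γ(V,h). -/
open scoped TensorProduct

noncomputable section

namespace CpxClifford

variable {V : Type*} [AddCommGroup V] [Module ℝ V]

/-- The complexified Clifford algebra `ℂl(V,h) = Cl(V,h) ⊗_ℝ ℂ` of a quadratic form. -/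
abbrev CCl (Q : QuadraticForm ℝ V) : Type _ := ℂ ⊗[ℝ] CliffordAlgebra Q

variable (Q : QuadraticForm ℝ V)

/-- The canonical embedding of `V` into the complexified Clifford algebra. -/
def ιC : V →ₗ[ℝ] CCl Q :=
  (Algebra.TensorProduct.includeRight :
      CliffordAlgebra Q →ₐ[ℝ] CCl Q).toLinearMap ∘ₗ CliffordAlgebra.ι Q

/-- The ℂ-linear extension `π_ℂ` of the parity (grade) involution. -/
def πC : CCl Q →ₐ[ℝ] CCl Q :=
  Algebra.TensorProduct.map (AlgHom.id ℝ ℂ) (CliffordAlgebra.involute)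

/-- The ℂ-antilinear extension `τ_ℂ` of the reversion anti-automorphism:
`τ_ℂ(z ⊗ x) = conj z ⊗ τ(x)`. -/
def τC : CCl Q →ₗ[ℝ] CCl Q :=
  TensorProduct.map (Complex.conjAe : ℂ ≃ₐ[ℝ] ℂ).toLinearMap CliffordAlgebra.reverse

/-- The twisted reversion `τ̃_ℂ = τ_ℂ ∘ π_ℂ`. -/
def τtC : CCl Q →ₗ[ℝ] CCl Q := τC Q ∘ₗ (πC Q).toLinearMap

/-- The twisted norm `N(x) = τ̃_ℂ(x) · x`. -/
def Nor (x : CCl Q) : CCl Q := τtC Q x * x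

/-- The twisted adjoint action `Ad~(x)(y) = π_ℂ(x) · y · x⁻¹` of a unit `x`. -/
def Adt (x : (CCl Q)ˣ) (y : CCl Q) : CCl Q := πC Q ↑x * y * ↑x⁻¹

/-- Membership in the complex Clifford group `Γ(V,h)`:
the twisted adjoint action preserves (the image of) `V`. -/
def memΓ (x : (CCl Q)ˣ) : Prop :=
  Adt Q x '' Set.range (ιC Q) = Set.range (ιC Q)

/-- Membership in the complex special Clifford group `Γˢ(V,h) = Γ(V,h) ∩ ℂl⁺(V,h)`:
the even elements of the complex Clifford group (even = fixed by the parity involution). -/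
def memΓs (x : (CCl Q)ˣ) : Prop :=
  memΓ Q x ∧ πC Q ↑x = (↑x : CCl Q)

open Classical in
/-- The complex scalar `c` such that `x = c·1`, when it exists (`0` otherwise). -/
def scalarOf (x : CCl Q) : ℂ :=
  if h : ∃ c : ℂ, x = algebraMap ℂ (CCl Q) c then h.choose else 0

/-- `|N(x)|`: the absolute value of the complex scalar `N(x)`. -/
def absN (x : CCl Q) : ℝ := ‖scalarOf Q (Nor Q x)‖

/-- Membership in `Pin^c(V,h) = {x ∈ Γ(V,h) : |N(x)| = 1}`. -/
def memPinc (x : (CCl Q)ˣ) : Prop := memΓ Q x ∧ absN Q ↑x = 1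

/-- Membership in `Spin^c(V,h) = {x ∈ Γˢ(V,h) : |N(x)| = 1}`. -/
def memSpinc (x : (CCl Q)ˣ) : Prop := memΓs Q x ∧ absN Q ↑x = 1

/-- The normalization map `r(x) = |N(x)|^{-1/2} · x`. -/
def rmap (x : CCl Q) : CCl Q := (Real.sqrt (absN Q x))⁻¹ • x

end CpxClifford

/-! For `x ∈ Γ` write `π(x) v = w x` with `w ∈ V`; applying the reversion gives
`v τ̃(x) = τ(x) w`, and together these yield `π(N(x)) v = v N(x)` for every `v ∈ V`.
The real and imaginary parts of `N(x)` in `Cl(V,h)` then twisted-commute with `V`. For an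
orthogonal basis `(eᵢ)`, the map `y ↦ h(eᵢ,eᵢ) y + eᵢ π(y) eᵢ` multiplies such an element by
`2 h(eᵢ,eᵢ) ≠ 0` but kills every word in the `eⱼ` containing `eᵢ` an odd number of times;
so the element lies in the span of words in which every `eⱼ` occurs an even number of times,
and those words are scalars. Finally `N(x)` is a unit, so the scalar is nonzero, and as it is
central, `N(xy) = τ̃(y) N(x) y = N(x) N(y)`. -/

namespace CliffordAlgebra

section wordProd

variable {R V I : Type*} [CommRing R] [AddCommGroup V] [Module R V] {Q : QuadraticForm R V}

variable (Q) in
def wordProd (e : I → V) (w : List I) : CliffordAlgebra Q :=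
  (w.map fun i => ι Q (e i)).prod

variable {e : I → V}

@[simp] lemma wordProd_nil : wordProd Q e [] = 1 := rfl

@[simp] lemma wordProd_cons (i : I) (w : List I) :
    wordProd Q e (i :: w) = ι Q (e i) * wordProd Q e w := List.prod_cons

lemma wordProd_append (w₁ w₂ : List I) :
    wordProd Q e (w₁ ++ w₂) = wordProd Q e w₁ * wordProd Q e w₂ := by
  simp [wordProd]

lemma span_range_wordProd (b : Module.Basis I R V) :
    Submodule.span R (Set.range (wordProd Q b)) = ⊤ := by
  rw [eq_top_iff]
  rintro x -
  induction x using CliffordAlgebra.induction with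
  | algebraMap r =>
    rw [Algebra.algebraMap_eq_smul_one]
    exact Submodule.smul_mem _ _ (Submodule.subset_span ⟨[], rfl⟩)
  | ι v =>
    have hv : ι Q v ∈ (Submodule.span R (Set.range b)).map (ι Q) := ⟨v, b.mem_span v, rfl⟩
    rw [Submodule.map_span, ← Set.range_comp] at hv
    refine Submodule.span_mono ?_ hv
    rintro _ ⟨i, rfl⟩
    exact ⟨[i], by simp⟩
  | mul x y hx hy =>
    have := Submodule.mul_mem_mul hx hy
    rw [Submodule.span_mul_span] at this
    refine Submodule.span_le.2 ?_ this
    rintro _ ⟨_, ⟨w₁, rfl⟩, _, ⟨w₂, rfl⟩, rfl⟩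
    exact Submodule.subset_span ⟨w₁ ++ w₂, wordProd_append w₁ w₂⟩
  | add x y hx hy => exact Submodule.add_mem _ hx hy

variable [DecidableEq I] (horth : Pairwise fun i j => Q.IsOrtho (e i) (e j))
include horth

lemma involute_wordProd_mul_ι (i : I) (w : List I) :
    involute (wordProd Q e w) * ι Q (e i) =
      (-1 : R) ^ w.count i • (ι Q (e i) * wordProd Q e w) := by
  induction w with
  | nil => simp
  | cons j t ih =>
    rw [wordProd_cons, map_mul, involute_ι, mul_assoc, ih, neg_mul, mul_smul_comm, ← mul_assoc]
    by_cases hji : j = i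
    · subst hji
      rw [List.count_cons_self, pow_succ, mul_neg_one, neg_smul, mul_assoc]
    · rw [List.count_cons_of_ne hji, ι_mul_ι_comm_of_isOrtho (horth hji), neg_mul, smul_neg,
        neg_neg, mul_assoc]

lemma ι_mul_wordProd_of_mem {i : I} {w : List I} (hi : i ∈ w) :
    ∃ s : R, ι Q (e i) * wordProd Q e w = s • wordProd Q e (w.erase i) := by
  induction w with
  | nil => simp at hi
  | cons j t ih =>
    by_cases hji : j = i
    · subst hji
      refine ⟨Q (e j), ?_⟩
      rw [List.erase_cons_head, wordProd_cons, ← mul_assoc, ι_sq_scalar, ← Algebra.smul_def]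
    · obtain ⟨s, hs⟩ := ih ((List.mem_cons.1 hi).resolve_left (Ne.symm hji))
      refine ⟨-s, ?_⟩
      rw [List.erase_cons_tail (by simpa using hji), wordProd_cons, wordProd_cons, ← mul_assoc,
        ι_mul_ι_comm_of_isOrtho (horth (Ne.symm hji)), neg_mul, mul_assoc, hs, mul_smul_comm,
        neg_smul]

lemma wordProd_mem_bot_of_even_count :
    ∀ w : List I, (∀ i, Even (w.count i)) →
      wordProd Q e w ∈ (⊥ : Subalgebra R (CliffordAlgebra Q))
  | [], _ => Subalgebra.one_mem _
  | i :: t, heven => by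
    have hodd : Odd (t.count i) := by
      simpa [List.count_cons_self, Nat.even_add_one] using heven i
    have hi : i ∈ t := List.count_pos_iff.1 hodd.pos
    have heven' : ∀ j, Even ((t.erase i).count j) := fun j => by
      by_cases hji : j = i
      · subst hji
        rw [List.count_erase_self]
        exact Nat.Odd.sub_odd hodd odd_one
      · rw [List.count_erase_of_ne hji]
        simpa [List.count_cons_of_ne (Ne.symm hji)] using heven j
    obtain ⟨s, hs⟩ := ι_mul_wordProd_of_mem horth hi
    rw [wordProd_cons, hs]
    exact Subalgebra.smul_mem _ (wordProd_mem_bot_of_even_count (t.erase i) heven') s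
termination_by w => w.length
decreasing_by exact List.length_erase_le.trans_lt (Nat.lt_succ_self _)

end wordProd

section kernel

variable {K V I : Type*} [Field K] [AddCommGroup V] [Module K V] {Q : QuadraticForm K V}
  [DecidableEq I] {e : I → V}

variable (Q e) in
def evenWordSpan (J : Finset I) : Submodule K (CliffordAlgebra Q) :=
  Submodule.span K (wordProd Q e '' {w | ∀ j ∈ J, Even (w.count j)})

lemma mem_evenWordSpan_insert [NeZero (2 : K)]
    (horth : Pairwise fun i j => Q.IsOrtho (e i) (e j)) {i : I} (hQ : Q (e i) ≠ 0)
    {J : Finset I} {a : CliffordAlgebra Q}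
    (ha : involute a * ι Q (e i) = ι Q (e i) * a) (hJ : a ∈ evenWordSpan Q e J) :
    a ∈ evenWordSpan Q e (insert i J) := by
  let P : CliffordAlgebra Q →ₗ[K] CliffordAlgebra Q := Q (e i) • LinearMap.id +
    LinearMap.mulLeft K (ι Q (e i)) ∘ₗ LinearMap.mulRight K (ι Q (e i)) ∘ₗ involute.toLinearMap
  have hP : ∀ x, P x = Q (e i) • x + ι Q (e i) * (involute x * ι Q (e i)) := fun _ => rfl
  have hPa : P a = (2 * Q (e i)) • a := by
    rw [hP, ha, ← mul_assoc, ι_sq_scalar, ← Algebra.smul_def, mul_smul, two_smul]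
  have hmaps : evenWordSpan Q e J ≤ (evenWordSpan Q e (insert i J)).comap P := by
    refine Submodule.span_le.2 ?_
    rintro _ ⟨w, hw, rfl⟩
    rw [SetLike.mem_coe, Submodule.mem_comap, hP, involute_wordProd_mul_ι horth, mul_smul_comm,
      ← mul_assoc, ι_sq_scalar, ← Algebra.smul_def, smul_smul, ← add_smul]
    rcases Nat.even_or_odd (w.count i) with hc | hc
    · refine Submodule.smul_mem _ _ (Submodule.subset_span ⟨w, ?_, rfl⟩)
      simpa [hc] using hw
    · rw [hc.neg_one_pow, neg_one_mul, add_neg_cancel, zero_smul]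
      exact Submodule.zero_mem _
  have h2Q : (2 * Q (e i)) ≠ 0 := mul_ne_zero two_ne_zero hQ
  rw [← inv_smul_smul₀ h2Q a, ← hPa]
  exact Submodule.smul_mem _ _ (hmaps hJ)

lemma mem_bot_of_involute_mul_ι_basis_eq [Fintype I] [NeZero (2 : K)]
    (b : Module.Basis I K V) (horth : Pairwise fun i j => Q.IsOrtho (b i) (b j))
    (hQ : ∀ i, Q (b i) ≠ 0)
    {a : CliffordAlgebra Q} (ha : ∀ i, involute a * ι Q (b i) = ι Q (b i) * a) :
    a ∈ (⊥ : Subalgebra K (CliffordAlgebra Q)) := by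
  have hmem : ∀ J, a ∈ evenWordSpan Q b J := by
    intro J
    induction J using Finset.induction_on with
    | empty => simp [evenWordSpan, Set.image_univ, span_range_wordProd b]
    | insert i J _ hJ => exact mem_evenWordSpan_insert horth (hQ i) (ha i) hJ
  refine (Submodule.span_le (p := Subalgebra.toSubmodule ⊥)).2 ?_ (hmem Finset.univ)
  rintro _ ⟨w, hw, rfl⟩
  exact wordProd_mem_bot_of_even_count horth w fun i => hw i (Finset.mem_univ i)

theorem mem_bot_of_forall_involute_mul_ι_eq [NeZero (2 : K)] [FiniteDimensional K V]
    {B : LinearMap.BilinForm K V} (hB : B.IsSymm) (hnd : B.Nondegenerate)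
    {a : CliffordAlgebra B.toQuadraticMap}
    (ha : ∀ v, involute a * ι B.toQuadraticMap v = ι B.toQuadraticMap v * a) :
    a ∈ (⊥ : Subalgebra K (CliffordAlgebra B.toQuadraticMap)) := by
  let := invertibleOfNonzero (two_ne_zero' K)
  obtain ⟨b, hb⟩ :=
    LinearMap.BilinForm.exists_orthogonal_basis (LinearMap.BilinForm.isSymm_iff.1 hB)
  refine mem_bot_of_involute_mul_ι_basis_eq b (fun i j hij => ?_)
    (LinearMap.BilinForm.iIsOrtho.not_isOrtho_basis_self_of_nondegenerate hb hnd)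
    fun i => ha (b i)
  simp [QuadraticMap.isOrtho_def, LinearMap.BilinMap.toQuadraticMap_apply,
    LinearMap.isOrthoᵢ_def.1 hb i j hij, LinearMap.isOrthoᵢ_def.1 hb j i hij.symm]

end kernel

end CliffordAlgebra

namespace CpxClifford

section coeffTensor

variable {A : Type*} [Semiring A] [Algebra ℝ A]

def coeffTensor (φ : ℂ →ₗ[ℝ] ℝ) : ℂ ⊗[ℝ] A →ₗ[ℝ] A :=
  TensorProduct.lift (LinearMap.lsmul ℝ A ∘ₗ φ)

variable (φ : ℂ →ₗ[ℝ] ℝ)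

@[simp] lemma coeffTensor_tmul (z : ℂ) (a : A) : coeffTensor φ (z ⊗ₜ a) = φ z • a := rfl

lemma coeffTensor_mul_one_tmul (N : ℂ ⊗[ℝ] A) (y : A) :
    coeffTensor φ (N * (1 ⊗ₜ y)) = coeffTensor φ N * y := by
  induction N using TensorProduct.induction_on with
  | zero => simp
  | tmul z a => simp
  | add N₁ N₂ h₁ h₂ => simp [add_mul, h₁, h₂]

lemma coeffTensor_one_tmul_mul (y : A) (N : ℂ ⊗[ℝ] A) :
    coeffTensor φ ((1 ⊗ₜ y) * N) = y * coeffTensor φ N := by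
  induction N using TensorProduct.induction_on with
  | zero => simp
  | tmul z a => simp
  | add N₁ N₂ h₁ h₂ => simp [mul_add, h₁, h₂]

lemma coeffTensor_map (f : A →ₐ[ℝ] A) (N : ℂ ⊗[ℝ] A) :
    coeffTensor φ (Algebra.TensorProduct.map (AlgHom.id ℝ ℂ) f N) = f (coeffTensor φ N) := by
  induction N using TensorProduct.induction_on with
  | zero => simp
  | tmul z a => simp
  | add N₁ N₂ h₁ h₂ => simp [h₁, h₂]

lemma one_tmul_re_add_I_tmul_im (N : ℂ ⊗[ℝ] A) :
    (1 : ℂ) ⊗ₜ coeffTensor Complex.reLm N + Complex.I ⊗ₜ coeffTensor Complex.imLm N = N := by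
  induction N using TensorProduct.induction_on with
  | zero => simp
  | tmul z a =>
    simp only [coeffTensor_tmul, TensorProduct.tmul_smul, TensorProduct.smul_tmul',
      ← TensorProduct.add_tmul]
    simp only [Complex.reLm_coe, Complex.imLm_coe, Complex.real_smul]
    rw [mul_one, Complex.re_add_im]
  | add N₁ N₂ h₁ h₂ =>
    rw [map_add, map_add, TensorProduct.tmul_add, TensorProduct.tmul_add, add_add_add_comm,
      h₁, h₂]

lemma mem_bot_of_coeffTensor_mem_bot {N : ℂ ⊗[ℝ] A}
    (hre : coeffTensor Complex.reLm N ∈ (⊥ : Subalgebra ℝ A))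
    (him : coeffTensor Complex.imLm N ∈ (⊥ : Subalgebra ℝ A)) :
    N ∈ (⊥ : Subalgebra ℂ (ℂ ⊗[ℝ] A)) := by
  obtain ⟨r, hr⟩ := Algebra.mem_bot.1 hre
  obtain ⟨s, hs⟩ := Algebra.mem_bot.1 him
  refine Algebra.mem_bot.2 ⟨⟨r, s⟩, ?_⟩
  rw [← one_tmul_re_add_I_tmul_im N, ← hr, ← hs, Algebra.TensorProduct.algebraMap_apply,
    Algebra.algebraMap_self, RingHom.id_apply]
  simp only [Algebra.algebraMap_eq_smul_one,
    TensorProduct.tmul_smul, TensorProduct.smul_tmul', ← TensorProduct.add_tmul]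
  congr 1
  apply Complex.ext <;> simp

end coeffTensor

open CliffordAlgebra

variable {V : Type*} [AddCommGroup V] [Module ℝ V] {Q : QuadraticForm ℝ V}

lemma ιC_apply (v : V) : ιC Q v = 1 ⊗ₜ ι Q v := rfl

lemma τC_tmul (z : ℂ) (a : CliffordAlgebra Q) :
    τC Q (z ⊗ₜ a) = starRingEnd ℂ z ⊗ₜ reverse a := rfl

lemma πC_tmul (z : ℂ) (a : CliffordAlgebra Q) : πC Q (z ⊗ₜ a) = z ⊗ₜ involute a := rfl

lemma τtC_apply (x : CCl Q) : τtC Q x = τC Q (πC Q x) := rfl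

lemma τC_ιC (v : V) : τC Q (ιC Q v) = ιC Q v := by
  rw [ιC_apply, τC_tmul, map_one, reverse_ι]

lemma τC_one : τC Q 1 = 1 := by
  rw [Algebra.TensorProduct.one_def, τC_tmul, map_one, reverse.map_one]

lemma τC_mul (x y : CCl Q) : τC Q (x * y) = τC Q y * τC Q x := by
  induction x using TensorProduct.induction_on with
  | zero => simp
  | tmul z a =>
    induction y using TensorProduct.induction_on with
    | zero => simp
    | tmul w b =>
      rw [Algebra.TensorProduct.tmul_mul_tmul, τC_tmul, τC_tmul, τC_tmul,
        Algebra.TensorProduct.tmul_mul_tmul, map_mul, reverse.map_mul,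
        mul_comm (starRingEnd ℂ w)]
    | add y₁ y₂ h₁ h₂ => rw [mul_add, map_add, h₁, h₂, map_add, add_mul]
  | add x₁ x₂ h₁ h₂ => rw [add_mul, map_add, h₁, h₂, map_add, mul_add]

lemma τtC_one : τtC Q 1 = 1 := by
  rw [τtC_apply, map_one, τC_one]

lemma τtC_mul (x y : CCl Q) : τtC Q (x * y) = τtC Q y * τtC Q x := by
  rw [τtC_apply, map_mul, τC_mul, τtC_apply, τtC_apply]

lemma πC_τtC (x : CCl Q) : πC Q (τtC Q x) = τC Q x := by
  induction x using TensorProduct.induction_on with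
  | zero => simp
  | tmul z a =>
    rw [τtC_apply, πC_tmul, τC_tmul, πC_tmul, τC_tmul, reverse_involute, involute_involute]
  | add x₁ x₂ h₁ h₂ => rw [map_add, map_add, h₁, h₂, map_add]

lemma isUnit_Nor (x : (CCl Q)ˣ) : IsUnit (Nor Q x) :=
  IsUnit.mul
    ⟨⟨τtC Q x, τtC Q ↑x⁻¹, by rw [← τtC_mul, x.inv_mul, τtC_one],
      by rw [← τtC_mul, x.mul_inv, τtC_one]⟩, rfl⟩
    x.isUnit

lemma Nor_mul (x y : CCl Q) : Nor Q (x * y) = τtC Q y * Nor Q x * y := by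
  simp only [Nor, τtC_mul, mul_assoc]

lemma πC_Nor_mul_ιC {x : (CCl Q)ˣ} (hx : memΓ Q x) (v : V) :
    πC Q (Nor Q x) * ιC Q v = ιC Q v * Nor Q x := by
  obtain ⟨w, hw⟩ : Adt Q x (ιC Q v) ∈ Set.range (ιC Q) :=
    hx ▸ Set.mem_image_of_mem _ ⟨v, rfl⟩
  have hxv : πC Q x * ιC Q v = ιC Q w * x := by rw [hw, Adt, Units.inv_mul_cancel_right]
  have hrev : ιC Q v * τtC Q x = τC Q x * ιC Q w := by
    simpa only [τC_mul, τC_ιC, τtC_apply] using congrArg (τC Q) hxv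
  calc πC Q (Nor Q x) * ιC Q v = τC Q x * (πC Q x * ιC Q v) := by
        rw [Nor, map_mul, πC_τtC, mul_assoc]
    _ = ιC Q v * Nor Q x := by rw [hxv, ← mul_assoc, ← hrev, mul_assoc, Nor]

lemma involute_coeffTensor_mul_ι {N : CCl Q} (hN : ∀ v, πC Q N * ιC Q v = ιC Q v * N)
    (φ : ℂ →ₗ[ℝ] ℝ) (v : V) :
    involute (coeffTensor φ N) * ι Q v = ι Q v * coeffTensor φ N := by
  have h := congrArg (coeffTensor φ) (hN v)
  rwa [ιC_apply, coeffTensor_mul_one_tmul, coeffTensor_one_tmul_mul, πC, coeffTensor_map] at h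

theorem mem_bot_of_forall_πC_mul_ιC_eq [FiniteDimensional ℝ V] {B : LinearMap.BilinForm ℝ V}
    (hB : B.IsSymm) (hnd : B.Nondegenerate) {N : CCl B.toQuadraticMap}
    (hN : ∀ v, πC _ N * ιC _ v = ιC _ v * N) :
    N ∈ (⊥ : Subalgebra ℂ (CCl B.toQuadraticMap)) :=
  mem_bot_of_coeffTensor_mem_bot
    (mem_bot_of_forall_involute_mul_ι_eq hB hnd (involute_coeffTensor_mul_ι hN _))
    (mem_bot_of_forall_involute_mul_ι_eq hB hnd (involute_coeffTensor_mul_ι hN _))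

end CpxClifford

open CpxClifford in
/-- For every element `x` of the complex Clifford group `Γ(V,h)`, the twisted norm
`N(x) = τ̃_ℂ(x)·x` is a nonzero complex scalar multiple of the identity; moreover `N`
restricts to a group homomorphism `Γ(V,h) → ℂˣ`, i.e. it is multiplicative on `Γ(V,h)`. -/
theorem twisted_norm_scalar_and_multiplicative_on_clifford_group
    {V : Type*} [AddCommGroup V] [Module ℝ V] [FiniteDimensional ℝ V]
    (h : LinearMap.BilinForm ℝ V) (hsymm : h.IsSymm) (hnd : h.Nondegenerate) :
    (∀ x : (CCl h.toQuadraticMap)ˣ, memΓ h.toQuadraticMap x →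
        ∃ c : ℂ, c ≠ 0 ∧
          Nor h.toQuadraticMap ↑x = algebraMap ℂ (CCl h.toQuadraticMap) c) ∧
    (∀ x y : (CCl h.toQuadraticMap)ˣ, memΓ h.toQuadraticMap x → memΓ h.toQuadraticMap y →
        Nor h.toQuadraticMap (↑(x * y) : CCl h.toQuadraticMap) =
          Nor h.toQuadraticMap ↑x * Nor h.toQuadraticMap ↑y) := by
  have hscalar : ∀ x, memΓ h.toQuadraticMap x →
      ∃ c : ℂ, algebraMap ℂ (CCl h.toQuadraticMap) c = Nor h.toQuadraticMap ↑x := fun x hx =>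
    Algebra.mem_bot.1 (mem_bot_of_forall_πC_mul_ιC_eq hsymm hnd (πC_Nor_mul_ιC hx))
  refine ⟨fun x hx => ?_, fun x y hx _ => ?_⟩
  · obtain ⟨c, hc⟩ := hscalar x hx
    refine ⟨c, ?_, hc.symm⟩
    rintro rfl
    exact (isUnit_Nor x).ne_zero (by rw [← hc, map_zero])
  · obtain ⟨c, hc⟩ := hscalar x hx
    rw [Units.val_mul, Nor_mul, ← hc, ← Algebra.commutes, mul_assoc, Nor]
end
end

section
/- Let γ: Cl(V,h) → End_ℂ(S) and γ': Cl(V',h') → End_ℂ(S') be weakly faithful complex Clifford representations, and let φ: S → S' be a ℂ-linear isomorphism such that conjugation by φ maps the subspace γ(ι(V)) onto γ'(ι'(V')). Then there is a unique linear map φ₀: V → V' satisfying γ'(ι'(φ₀(v))) = φ∘γ(ι(v))∘φ^{-1} for all v ∈ V; this φ₀ is a bijective isometry from (V,h) to (V',h'), and (φ₀,φ) is an isomorphism of complex Clifford representations from γ to γ'. Moreover φ₀ is the unique isometry for which (φ₀,φ) is a morphism of complex Clifford representations. -/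
/-!
Because `v ↦ γ'(ι'(v))` is injective and conjugation by `φ` carries `γ(ι(V))` into
`γ'(ι'(V'))`, the linear map `v ↦ φ γ(ι(v)) φ⁻¹` factors uniquely through `γ' ∘ ι'`; this is
`φ₀`. It is injective since `γ ∘ ι` and conjugation are, and surjective since conjugation maps
`γ(ι(V))` onto `γ'(ι'(V'))`. Squaring `γ'(ι'(φ₀ v)) = φ γ(ι(v)) φ⁻¹` and using
`ι(v)² = h(v,v)` shows that `φ₀` preserves the quadratic forms, hence, by polarization, the
symmetric bilinear forms. Then `γ' ∘ Cl(φ₀)` and conjugation of `γ` by `φ` agree on generators,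
so they agree on all of `Cl(V,h)`.
-/

noncomputable section

namespace CpxCliffordRep

/-- The image `γ(ι(V))` of `V` in `End_ℂ(S)` under a complex Clifford representation. -/
def gammaV {V : Type*} [AddCommGroup V] [Module ℝ V]
    {S : Type*} [AddCommGroup S] [Module ℝ S] [Module ℂ S] [IsScalarTower ℝ ℂ S]
    (Q : QuadraticForm ℝ V) (γ : CliffordAlgebra Q →ₐ[ℝ] Module.End ℂ S) :
    Set (Module.End ℂ S) :=
  Set.range fun v : V => γ (CliffordAlgebra.ι Q v)

/-- A complex Clifford representation is weakly faithful if `v ↦ γ(ι(v))` is injective. -/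
def WeaklyFaithful {V : Type*} [AddCommGroup V] [Module ℝ V]
    {S : Type*} [AddCommGroup S] [Module ℝ S] [Module ℂ S] [IsScalarTower ℝ ℂ S]
    (Q : QuadraticForm ℝ V) (γ : CliffordAlgebra Q →ₐ[ℝ] Module.End ℂ S) : Prop :=
  Function.Injective fun v : V => γ (CliffordAlgebra.ι Q v)

/-- Conjugation `A ↦ φ ∘ A ∘ φ⁻¹` by a ℂ-linear isomorphism `φ : S ≃ S'`. -/
def conjMap {S S' : Type*} [AddCommGroup S] [Module ℂ S] [AddCommGroup S'] [Module ℂ S']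
    (φ : S ≃ₗ[ℂ] S') (A : Module.End ℂ S) : Module.End ℂ S' :=
  φ.toLinearMap ∘ₗ A ∘ₗ φ.symm.toLinearMap

/-- `(φ₀, φ)` is a morphism of complex Clifford representations from `γ` to `γ'`:
`φ₀` is an isometry from `(V,h)` to `(V',h')` and
`γ'(Cl(φ₀)(x)) ∘ φ = φ ∘ γ(x)` for all `x ∈ Cl(V,h)`, where `Cl(φ₀)` is the (unique)
unital algebra morphism induced by `φ₀`, characterized by `Cl(φ₀)(ι(v)) = ι'(φ₀(v))`. -/
def IsRepMor {V V' : Type*} [AddCommGroup V] [Module ℝ V] [AddCommGroup V'] [Module ℝ V']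
    {S S' : Type*} [AddCommGroup S] [Module ℝ S] [Module ℂ S] [IsScalarTower ℝ ℂ S]
    [AddCommGroup S'] [Module ℝ S'] [Module ℂ S'] [IsScalarTower ℝ ℂ S']
    (h : LinearMap.BilinForm ℝ V) (h' : LinearMap.BilinForm ℝ V')
    (γ : CliffordAlgebra h.toQuadraticMap →ₐ[ℝ] Module.End ℂ S)
    (γ' : CliffordAlgebra h'.toQuadraticMap →ₐ[ℝ] Module.End ℂ S')
    (φ₀ : V →ₗ[ℝ] V') (φ : S →ₗ[ℂ] S') : Prop :=
  (∀ v w : V, h' (φ₀ v) (φ₀ w) = h v w) ∧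
  ∃ Φ : CliffordAlgebra h.toQuadraticMap →ₐ[ℝ] CliffordAlgebra h'.toQuadraticMap,
    (∀ v : V, Φ (CliffordAlgebra.ι h.toQuadraticMap v) =
        CliffordAlgebra.ι h'.toQuadraticMap (φ₀ v)) ∧
    ∀ x : CliffordAlgebra h.toQuadraticMap, (γ' (Φ x)) ∘ₗ φ = φ ∘ₗ (γ x)

/-- Membership in the complex Lipschitz group `L_γ` of a (weakly faithful) complex Clifford
representation: conjugation by `φ` preserves `γ(ι(V))`. -/
def memLip {V : Type*} [AddCommGroup V] [Module ℝ V]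
    {S : Type*} [AddCommGroup S] [Module ℝ S] [Module ℂ S] [IsScalarTower ℝ ℂ S]
    (Q : QuadraticForm ℝ V) (γ : CliffordAlgebra Q →ₐ[ℝ] Module.End ℂ S)
    (φ : S ≃ₗ[ℂ] S) : Prop :=
  conjMap φ '' gammaV Q γ = gammaV Q γ

/-- A complex Clifford representation is irreducible if the only invariant complex
subspaces of `S` are `0` and `S`. -/
def IsIrred {V : Type*} [AddCommGroup V] [Module ℝ V]
    {S : Type*} [AddCommGroup S] [Module ℝ S] [Module ℂ S] [IsScalarTower ℝ ℂ S]
    (Q : QuadraticForm ℝ V) (γ : CliffordAlgebra Q →ₐ[ℝ] Module.End ℂ S) : Prop :=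
  ∀ W : Submodule ℂ S, (∀ (x : CliffordAlgebra Q), ∀ w ∈ W, γ x w ∈ W) → W = ⊥ ∨ W = ⊤

/-- `(V,h)` has signature `(p,q)`: there is a basis `e₁,…,e_{p+q}` with
`h(eᵢ,eⱼ) = 0` for `i ≠ j`, `h(eᵢ,eᵢ) = 1` for `i ≤ p` and `h(eᵢ,eᵢ) = -1` for `i > p`. -/
def HasSignature {V : Type*} [AddCommGroup V] [Module ℝ V]
    (h : LinearMap.BilinForm ℝ V) (p q : ℕ) : Prop :=
  ∃ b : Module.Basis (Fin (p + q)) ℝ V, ∀ i j : Fin (p + q),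
    h (b i) (b j) = if i = j then (if (i : ℕ) < p then 1 else -1) else 0

end CpxCliffordRep

theorem LinearMap.exists_comp_eq_of_forall_mem_range {R M N P : Type*} [Ring R]
    [AddCommGroup M] [Module R M] [AddCommGroup N] [Module R N] [AddCommGroup P] [Module R P]
    {f : M →ₗ[R] P} (hf : Function.Injective f) {g : N →ₗ[R] P}
    (hg : ∀ n, g n ∈ LinearMap.range f) : ∃ φ : N →ₗ[R] M, f ∘ₗ φ = g :=
  ⟨(LinearEquiv.ofInjective f hf).symm.toLinearMap ∘ₗ g.codRestrict _ hg, by ext; simp⟩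

theorem LinearMap.BilinForm.apply_map_map_eq_of_isSymm {K V V' : Type*} [Field K]
    [NeZero (2 : K)] [AddCommGroup V] [Module K V] [AddCommGroup V'] [Module K V']
    {h : LinearMap.BilinForm K V} {h' : LinearMap.BilinForm K V'} (hs : h.IsSymm)
    (hs' : h'.IsSymm) {f : V →ₗ[K] V'} (hf : ∀ v, h' (f v) (f v) = h v v) (v w : V) :
    h' (f v) (f w) = h v w := by
  rw [hs.polarization, hs'.polarization, ← map_add, hf, hf, hf]

namespace CpxCliffordRep

open CliffordAlgebra

variable {V V' : Type*} [AddCommGroup V] [Module ℝ V] [AddCommGroup V'] [Module ℝ V']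
  {S S' : Type*} [AddCommGroup S] [Module ℝ S] [Module ℂ S] [IsScalarTower ℝ ℂ S]
  [AddCommGroup S'] [Module ℝ S'] [Module ℂ S'] [IsScalarTower ℝ ℂ S']
  {Q : QuadraticForm ℝ V} {Q' : QuadraticForm ℝ V'}
  {γ : CliffordAlgebra Q →ₐ[ℝ] Module.End ℂ S} {γ' : CliffordAlgebra Q' →ₐ[ℝ] Module.End ℂ S'}
  {φ : S ≃ₗ[ℂ] S'} {φ₀ ψ₀ : V →ₗ[ℝ] V'}

theorem conjMap_eq_conjAlgEquiv (φ : S ≃ₗ[ℂ] S') : conjMap φ = φ.conjAlgEquiv ℝ := rfl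

variable (γ γ' φ) in
def IsConjAction (φ₀ : V →ₗ[ℝ] V') : Prop :=
  ∀ v, γ' (ι Q' (φ₀ v)) = conjMap φ (γ (ι Q v))

theorem exists_isConjAction (hγ' : WeaklyFaithful Q' γ')
    (hconj : conjMap φ '' gammaV Q γ ⊆ gammaV Q' γ') : ∃ φ₀, IsConjAction γ γ' φ φ₀ := by
  obtain ⟨φ₀, hφ₀⟩ := LinearMap.exists_comp_eq_of_forall_mem_range (f := γ'.toLinearMap ∘ₗ ι Q')
    hγ' (g := (φ.conjAlgEquiv ℝ).toLinearMap ∘ₗ γ.toLinearMap ∘ₗ ι Q)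
    fun v => hconj ⟨_, ⟨v, rfl⟩, rfl⟩
  exact ⟨φ₀, LinearMap.congr_fun hφ₀⟩

namespace IsConjAction

theorem unique (hγ' : WeaklyFaithful Q' γ') (hφ₀ : IsConjAction γ γ' φ φ₀)
    (hψ₀ : IsConjAction γ γ' φ ψ₀) : φ₀ = ψ₀ :=
  LinearMap.ext fun v => hγ' ((hφ₀ v).trans (hψ₀ v).symm)

theorem injective (hγ : WeaklyFaithful Q γ) (hφ₀ : IsConjAction γ γ' φ φ₀) :
    Function.Injective φ₀ := fun v w hvw =>
  hγ <| (φ.conjAlgEquiv ℝ).injective <| by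
    simp only [← conjMap_eq_conjAlgEquiv, ← hφ₀ v, ← hφ₀ w, hvw]

theorem surjective (hγ' : WeaklyFaithful Q' γ') (hconj : gammaV Q' γ' ⊆ conjMap φ '' gammaV Q γ)
    (hφ₀ : IsConjAction γ γ' φ φ₀) : Function.Surjective φ₀ := fun v' => by
  obtain ⟨_, ⟨v, rfl⟩, hv⟩ := hconj ⟨v', rfl⟩
  exact ⟨v, hγ' ((hφ₀ v).trans hv)⟩

theorem map_app [Nontrivial S'] (hφ₀ : IsConjAction γ γ' φ φ₀) (v : V) : Q' (φ₀ v) = Q v := by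
  apply FaithfulSMul.algebraMap_injective ℝ (Module.End ℂ S')
  calc algebraMap ℝ _ (Q' (φ₀ v)) = γ' (ι Q' (φ₀ v)) * γ' (ι Q' (φ₀ v)) := by
        rw [← map_mul, ι_sq_scalar, AlgHom.commutes]
    _ = φ.conjAlgEquiv ℝ (γ (ι Q v)) * φ.conjAlgEquiv ℝ (γ (ι Q v)) := by rw [hφ₀ v]; rfl
    _ = algebraMap ℝ _ (Q v) := by
        rw [← map_mul, ← map_mul, ι_sq_scalar, AlgHom.commutes, AlgEquiv.commutes]

def toIsometry [Nontrivial S'] (hφ₀ : IsConjAction γ γ' φ φ₀) : Q →qᵢ Q' :=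
  ⟨φ₀, hφ₀.map_app⟩

theorem comp_map [Nontrivial S'] (hφ₀ : IsConjAction γ γ' φ φ₀) :
    γ'.comp (map hφ₀.toIsometry) = (φ.conjAlgEquiv ℝ : _ →ₐ[ℝ] _).comp γ :=
  hom_ext <| LinearMap.ext fun v => (congrArg γ' (map_apply_ι _ v)).trans (hφ₀ v)

end IsConjAction

section Bilinear

variable {h : LinearMap.BilinForm ℝ V} {h' : LinearMap.BilinForm ℝ V'}
  {γ : CliffordAlgebra h.toQuadraticMap →ₐ[ℝ] Module.End ℂ S}
  {γ' : CliffordAlgebra h'.toQuadraticMap →ₐ[ℝ] Module.End ℂ S'}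

theorem IsConjAction.isRepMor [Nontrivial S'] (hsymm : h.IsSymm) (hsymm' : h'.IsSymm)
    (hφ₀ : IsConjAction γ γ' φ φ₀) : IsRepMor h h' γ γ' φ₀ φ.toLinearMap := by
  refine ⟨LinearMap.BilinForm.apply_map_map_eq_of_isSymm hsymm hsymm' hφ₀.map_app,
    map hφ₀.toIsometry, fun v => map_apply_ι _ v, fun x => ?_⟩
  rw [← AlgHom.comp_apply, hφ₀.comp_map]
  ext s
  simp

theorem IsRepMor.isConjAction (hψ₀ : IsRepMor h h' γ γ' ψ₀ φ.toLinearMap) :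
    IsConjAction γ γ' φ ψ₀ := fun v => by
  obtain ⟨-, Ψ, hΨι, hΨ⟩ := hψ₀
  rw [← hΨι]
  exact (LinearEquiv.eq_comp_toLinearMap_symm _ _).2 (hΨ _)

end Bilinear

end CpxCliffordRep

open CpxCliffordRep in
theorem exists_unique_isometry_of_conj_maps_gammaV_general
    {V V' : Type*} [AddCommGroup V] [Module ℝ V]
    [AddCommGroup V'] [Module ℝ V']
    {S S' : Type*} [AddCommGroup S] [Module ℝ S] [Module ℂ S] [IsScalarTower ℝ ℂ S]
    [AddCommGroup S'] [Module ℝ S'] [Module ℂ S'] [IsScalarTower ℝ ℂ S']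
    [Nontrivial S']
    (h : LinearMap.BilinForm ℝ V) (hsymm : h.IsSymm)
    (h' : LinearMap.BilinForm ℝ V') (hsymm' : h'.IsSymm)
    (γ : CliffordAlgebra h.toQuadraticMap →ₐ[ℝ] Module.End ℂ S)
    (γ' : CliffordAlgebra h'.toQuadraticMap →ₐ[ℝ] Module.End ℂ S')
    (hγ : WeaklyFaithful h.toQuadraticMap γ) (hγ' : WeaklyFaithful h'.toQuadraticMap γ')
    (φ : S ≃ₗ[ℂ] S')
    (hconj : conjMap φ '' gammaV h.toQuadraticMap γ = gammaV h'.toQuadraticMap γ') :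
    -- existence and uniqueness of the linear map `φ₀`
    (∃! φ₀ : V →ₗ[ℝ] V', ∀ v : V,
        γ' (CliffordAlgebra.ι h'.toQuadraticMap (φ₀ v)) =
          conjMap φ (γ (CliffordAlgebra.ι h.toQuadraticMap v))) ∧
    -- any such `φ₀` is a bijective isometry and `(φ₀,φ)` is an isomorphism of
    -- complex Clifford representations
    (∀ φ₀ : V →ₗ[ℝ] V',
        (∀ v : V, γ' (CliffordAlgebra.ι h'.toQuadraticMap (φ₀ v)) =
          conjMap φ (γ (CliffordAlgebra.ι h.toQuadraticMap v))) →
        Function.Bijective φ₀ ∧ (∀ v w : V, h' (φ₀ v) (φ₀ w) = h v w) ∧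
        IsRepMor h h' γ γ' φ₀ φ.toLinearMap ∧
        -- `φ₀` is the unique isometry for which `(φ₀,φ)` is a morphism
        (∀ ψ₀ : V →ₗ[ℝ] V', IsRepMor h h' γ γ' ψ₀ φ.toLinearMap → ψ₀ = φ₀)) := by
  obtain ⟨φ₀, hφ₀⟩ := exists_isConjAction hγ' hconj.subset
  refine ⟨⟨φ₀, hφ₀, fun ψ₀ hψ₀ => IsConjAction.unique hγ' hψ₀ hφ₀⟩,
    fun φ₀ (hφ₀ : IsConjAction γ γ' φ φ₀) => ?_⟩
  have hmor := IsConjAction.isRepMor hsymm hsymm' hφ₀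
  exact ⟨⟨hφ₀.injective hγ, hφ₀.surjective hγ' hconj.superset⟩, hmor.1, hmor,
    fun ψ₀ hψ₀ => hψ₀.isConjAction.unique hγ' hφ₀⟩

open CpxCliffordRep in
/-- If `γ, γ'` are weakly faithful and conjugation by a ℂ-linear isomorphism `φ : S ≃ S'`
maps `γ(ι(V))` onto `γ'(ι'(V'))`, then there is a unique linear map `φ₀ : V → V'` with
`γ'(ι'(φ₀(v))) = φ∘γ(ι(v))∘φ⁻¹` for all `v`; this `φ₀` is a bijective isometry and
`(φ₀,φ)` is an isomorphism of complex Clifford representations; moreover `φ₀` is the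
unique isometry making `(φ₀,φ)` a morphism. -/
theorem exists_unique_isometry_of_conj_maps_gammaV
    {V V' : Type*} [AddCommGroup V] [Module ℝ V] [FiniteDimensional ℝ V]
    [AddCommGroup V'] [Module ℝ V'] [FiniteDimensional ℝ V']
    {S S' : Type*} [AddCommGroup S] [Module ℝ S] [Module ℂ S] [IsScalarTower ℝ ℂ S]
    [FiniteDimensional ℂ S] [Nontrivial S]
    [AddCommGroup S'] [Module ℝ S'] [Module ℂ S'] [IsScalarTower ℝ ℂ S']
    [FiniteDimensional ℂ S'] [Nontrivial S']
    (h : LinearMap.BilinForm ℝ V) (hsymm : h.IsSymm) (hnd : h.Nondegenerate)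
    (h' : LinearMap.BilinForm ℝ V') (hsymm' : h'.IsSymm) (hnd' : h'.Nondegenerate)
    (γ : CliffordAlgebra h.toQuadraticMap →ₐ[ℝ] Module.End ℂ S)
    (γ' : CliffordAlgebra h'.toQuadraticMap →ₐ[ℝ] Module.End ℂ S')
    (hγ : WeaklyFaithful h.toQuadraticMap γ) (hγ' : WeaklyFaithful h'.toQuadraticMap γ')
    (φ : S ≃ₗ[ℂ] S')
    (hconj : conjMap φ '' gammaV h.toQuadraticMap γ = gammaV h'.toQuadraticMap γ') :
    -- existence and uniqueness of the linear map `φ₀`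
    (∃! φ₀ : V →ₗ[ℝ] V', ∀ v : V,
        γ' (CliffordAlgebra.ι h'.toQuadraticMap (φ₀ v)) =
          conjMap φ (γ (CliffordAlgebra.ι h.toQuadraticMap v))) ∧
    -- any such `φ₀` is a bijective isometry and `(φ₀,φ)` is an isomorphism of
    -- complex Clifford representations
    (∀ φ₀ : V →ₗ[ℝ] V',
        (∀ v : V, γ' (CliffordAlgebra.ι h'.toQuadraticMap (φ₀ v)) =
          conjMap φ (γ (CliffordAlgebra.ι h.toQuadraticMap v))) →
        Function.Bijective φ₀ ∧ (∀ v w : V, h' (φ₀ v) (φ₀ w) = h v w) ∧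
        IsRepMor h h' γ γ' φ₀ φ.toLinearMap ∧
        -- `φ₀` is the unique isometry for which `(φ₀,φ)` is a morphism
        (∀ ψ₀ : V →ₗ[ℝ] V', IsRepMor h h' γ γ' ψ₀ φ.toLinearMap → ψ₀ = φ₀)) :=
  exists_unique_isometry_of_conj_maps_gammaV_general h hsymm h' hsymm' γ γ' hγ hγ' φ hconj
end
end
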